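/- Let n_x, n_y, n_z be i.i.d. symmetric real random variables with mean 0, variance σ², finite fourth moment μ'₄, and δ_y, δ_z ∈ ℝ. Define z := (n_x − n_y + δ_y)² − (n_x − n_z + δ_z)². Then E(z) = δ_y² − δ_z² and Var(z) = 2μ'₄ + 6σ⁴ + 8σ²(δ_y² + δ_z² − δ_y δ_z). -/

import Mathlib

/-!
Write `x, y, z` for `n_x, n_y, n_z`. Since
`(x - y + δy)² - (x - z + δz)² = (z - y + δy - δz) (2x - y - z + δy + δz)`,
the variable is affine in `x` once `y, z` are fixed. Pushing `(y, z, x)` forward to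
`μ ⊗ μ ⊗ μ`, both moments become iterated integrals. Each inner integral is that of a
polynomial of degree at most four in one variable, and under a symmetric law such an
integral sees only the even moments `1, σ², μ'₄`.
-/

open MeasureTheory ProbabilityTheory

theorem integral_eq_zero_of_map_neg_eq_self {G : Type*} [MeasurableSpace G] [InvolutiveNeg G]
    [MeasurableNeg G] {μ : Measure G} (hsymm : μ.map (fun x => -x) = μ) {f : G → ℝ}
    (hf : ∀ x, f (-x) = -f x) :
    ∫ x, f x ∂μ = 0 := by
  have h : ∫ x, f x ∂μ = ∫ x, f (-x) ∂μ := by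
    conv_lhs => rw [← hsymm]
    exact (MeasurableEquiv.neg G).measurableEmbedding.integral_map f
  simp only [hf, integral_neg] at h
  linarith

theorem memLp_id_of_integrable_pow {μ : Measure ℝ} {n : ℕ} (hn : n ≠ 0)
    (h : Integrable (fun x => x ^ n) μ) : MemLp id n μ := by
  rw [← integrable_norm_rpow_iff aestronglyMeasurable_id (by exact_mod_cast hn) (by simp)]
  simpa [← norm_pow] using h.norm

theorem integrable_pow_of_le {μ : Measure ℝ} [IsFiniteMeasure μ] {k n : ℕ} (hkn : k ≤ n)
    (h : Integrable (fun x => x ^ n) μ) : Integrable (fun x => x ^ k) μ := by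
  rw [← integrable_norm_iff (by fun_prop)]
  simp only [norm_pow]
  exact integrable_norm_pow_of_le aestronglyMeasurable_id hkn (by simpa [norm_pow] using h.norm)

theorem integral_quartic_of_map_neg_eq_self {μ : Measure ℝ} [IsProbabilityMeasure μ]
    (hsymm : μ.map (fun x => -x) = μ) (hint : Integrable (fun x => x ^ 4) μ)
    {f : ℝ → ℝ} (c₀ c₁ c₂ c₃ c₄ : ℝ)
    (hf : ∀ t, f t = c₀ + c₁ * t + c₂ * t ^ 2 + c₃ * t ^ 3 + c₄ * t ^ 4) :
    ∫ t, f t ∂μ = c₀ + c₂ * ∫ t, t ^ 2 ∂μ + c₄ * ∫ t, t ^ 4 ∂μ := by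
  have h₁ : Integrable (fun t : ℝ => t) μ := by
    simpa using integrable_pow_of_le (k := 1) (by norm_num) hint
  have h₂ : Integrable (fun t : ℝ => t ^ 2) μ := integrable_pow_of_le (by norm_num) hint
  have h₃ : Integrable (fun t : ℝ => t ^ 3) μ := integrable_pow_of_le (by norm_num) hint
  have hodd_int : Integrable (fun t => c₁ * t + c₃ * t ^ 3) μ :=
    (h₁.const_mul c₁).add (h₃.const_mul c₃)
  have hodd : ∫ t, (c₁ * t + c₃ * t ^ 3) ∂μ = 0 :=
    integral_eq_zero_of_map_neg_eq_self hsymm fun t => by ring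
  calc ∫ t, f t ∂μ = ∫ t, (c₀ + c₂ * t ^ 2 + c₄ * t ^ 4 + (c₁ * t + c₃ * t ^ 3)) ∂μ := by
        congr 1; funext t; rw [hf]; ring
    _ = c₀ + c₂ * ∫ t, t ^ 2 ∂μ + c₄ * ∫ t, t ^ 4 ∂μ := by
        rw [integral_add (by fun_prop) hodd_int, hodd, integral_add (by fun_prop) (by fun_prop),
          integral_add (by fun_prop) (by fun_prop), integral_const, integral_const_mul,
          integral_const_mul]
        simp

theorem ProbabilityTheory.iIndepFun.map_prodMk_prodMk_eq {Ω ι β : Type*} [MeasurableSpace Ω]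
    [MeasurableSpace β] {P : Measure Ω} [IsProbabilityMeasure P] {f : ι → Ω → β}
    (hf : ∀ i, Measurable (f i)) (hindep : iIndepFun f P) {i j k : ι}
    (hij : i ≠ j) (hik : i ≠ k) (hjk : j ≠ k) :
    P.map (fun ω => ((f i ω, f j ω), f k ω))
      = ((P.map (f i)).prod (P.map (f j))).prod (P.map (f k)) := by
  rw [(hindep.indepFun_prodMk hf i j k hik hjk).map_prod_eq_prod_map_map
      ((hf i).prodMk (hf j)).aemeasurable (hf k).aemeasurable,
    (hindep.indepFun hij).map_prod_eq_prod_map_map (hf i).aemeasurable (hf j).aemeasurable]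

theorem integral_prod_eq_of_integral_eq {α β : Type*} [MeasurableSpace α] [MeasurableSpace β]
    {μ : Measure α} {ν : Measure β} [SFinite μ] [SFinite ν] {f : α × β → ℝ}
    (hf : Integrable f (μ.prod ν)) {g : α → ℝ} (hg : ∀ a, ∫ b, f (a, b) ∂ν = g a) :
    Integrable g μ ∧ ∫ p, f p ∂(μ.prod ν) = ∫ a, g a ∂μ := by
  have hg' : (fun a => ∫ b, f (a, b) ∂ν) = g := funext hg
  exact ⟨hg' ▸ hf.integral_prod_left, hg' ▸ integral_prod f hf⟩

/-- Coordinates are `((y, z), x)`, so that Fubini on `(μ.prod μ).prod μ` integrates out `x`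
first. -/
def sqDistDiff (δy δz : ℝ) (p : (ℝ × ℝ) × ℝ) : ℝ :=
  (p.2 - p.1.1 + δy) ^ 2 - (p.2 - p.1.2 + δz) ^ 2

section SqDistDiff

variable {μ : Measure ℝ} [IsProbabilityMeasure μ]

theorem memLp_sqDistDiff (hint : Integrable (fun x => x ^ 4) μ) (δy δz : ℝ) :
    MemLp (sqDistDiff δy δz) 2 ((μ.prod μ).prod μ) := by
  have hid : MemLp id 4 μ := by exact_mod_cast memLp_id_of_integrable_pow (by norm_num) hint
  have hx : MemLp (fun p : (ℝ × ℝ) × ℝ => p.2) 4 ((μ.prod μ).prod μ) :=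
    hid.comp_measurePreserving measurePreserving_snd
  have hy : MemLp (fun p : (ℝ × ℝ) × ℝ => p.1.1) 4 ((μ.prod μ).prod μ) :=
    hid.comp_measurePreserving (measurePreserving_fst.comp measurePreserving_fst)
  have hz : MemLp (fun p : (ℝ × ℝ) × ℝ => p.1.2) 4 ((μ.prod μ).prod μ) :=
    hid.comp_measurePreserving (measurePreserving_snd.comp measurePreserving_fst)
  have : ENNReal.HolderTriple 4 4 2 := ⟨by
    rw [← two_mul, show (4 : ENNReal) = 2 * 2 by norm_num, ENNReal.mul_inv (by simp) (by simp),
      ← mul_assoc, ENNReal.mul_inv_cancel (by simp) (by simp), one_mul]⟩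
  have hfactor : sqDistDiff δy δz = fun p =>
      (p.1.2 - p.1.1 + (δy - δz)) * (2 * p.2 - p.1.1 - p.1.2 + (δy + δz)) := by
    funext p; simp only [sqDistDiff]; ring
  rw [hfactor]
  exact MemLp.mul' (((hx.const_mul 2).sub hy).sub hz |>.add (memLp_const _))
    ((hz.sub hy).add (memLp_const _))

theorem integral_sqDistDiff (hsymm : μ.map (fun x => -x) = μ)
    (hint : Integrable (fun x => x ^ 4) μ) (δy δz : ℝ) :
    ∫ p, sqDistDiff δy δz p ∂((μ.prod μ).prod μ) = δy ^ 2 - δz ^ 2 := by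
  have hx (q : ℝ × ℝ) : ∫ x, sqDistDiff δy δz (q, x) ∂μ
      = (q.2 - q.1 + δy - δz) * (δy + δz - q.1 - q.2) :=
    (integral_quartic_of_map_neg_eq_self hsymm hint
      ((q.2 - q.1 + δy - δz) * (δy + δz - q.1 - q.2)) (2 * (q.2 - q.1 + δy - δz)) 0 0 0
      fun x => by simp only [sqDistDiff]; ring).trans (by ring)
  have hz (y : ℝ) : ∫ z, (z - y + δy - δz) * (δy + δz - y - z) ∂μ
      = (δy - δz - y) * (δy + δz - y) - ∫ t, t ^ 2 ∂μ :=
    (integral_quartic_of_map_neg_eq_self hsymm hint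
      ((δy - δz - y) * (δy + δz - y)) (2 * δz) (-1) 0 0 fun z => by ring).trans (by ring)
  have hy : ∫ y, ((δy - δz - y) * (δy + δz - y) - ∫ t, t ^ 2 ∂μ) ∂μ = δy ^ 2 - δz ^ 2 :=
    (integral_quartic_of_map_neg_eq_self hsymm hint
      (δy ^ 2 - δz ^ 2 - ∫ t, t ^ 2 ∂μ) (-2 * δy) 1 0 0 fun y => by ring).trans (by ring)
  obtain ⟨hint_x, h_x⟩ :=
    integral_prod_eq_of_integral_eq ((memLp_sqDistDiff hint δy δz).integrable one_le_two) hx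
  obtain ⟨-, h_z⟩ := integral_prod_eq_of_integral_eq hint_x hz
  rw [h_x, h_z, hy]

theorem integral_sqDistDiff_sq (hsymm : μ.map (fun x => -x) = μ)
    (hint : Integrable (fun x => x ^ 4) μ) (δy δz : ℝ) :
    ∫ p, sqDistDiff δy δz p ^ 2 ∂((μ.prod μ).prod μ)
      = (δy ^ 2 - δz ^ 2) ^ 2 + 2 * ∫ t, t ^ 4 ∂μ + 6 * (∫ t, t ^ 2 ∂μ) ^ 2
        + 8 * (∫ t, t ^ 2 ∂μ) * (δy ^ 2 + δz ^ 2 - δy * δz) := by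
  set m₂ := ∫ t, t ^ 2 ∂μ
  set m₄ := ∫ t, t ^ 4 ∂μ
  have hx (q : ℝ × ℝ) : ∫ x, sqDistDiff δy δz (q, x) ^ 2 ∂μ
      = (q.2 - q.1 + δy - δz) ^ 2 * ((δy + δz - q.1 - q.2) ^ 2 + 4 * m₂) :=
    (integral_quartic_of_map_neg_eq_self hsymm hint
      ((q.2 - q.1 + δy - δz) ^ 2 * (δy + δz - q.1 - q.2) ^ 2)
      (4 * (q.2 - q.1 + δy - δz) ^ 2 * (δy + δz - q.1 - q.2)) (4 * (q.2 - q.1 + δy - δz) ^ 2) 0 0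
      fun x => by simp only [sqDistDiff]; ring).trans (by ring)
  have hz (y : ℝ) : ∫ z, (z - y + δy - δz) ^ 2 * ((δy + δz - y - z) ^ 2 + 4 * m₂) ∂μ
      = (δy - δz - y) ^ 2 * ((δy + δz - y) ^ 2 + 4 * m₂)
        + (4 * δz ^ 2 - 2 * (δy - δz - y) * (δy + δz - y) + 4 * m₂) * m₂ + m₄ := by
    set a := δy - δz - y
    set b := δy + δz - y
    exact (integral_quartic_of_map_neg_eq_self hsymm hint
      (a ^ 2 * b ^ 2 + 4 * m₂ * a ^ 2) (2 * a * b * (b - a) + 8 * m₂ * a)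
      ((b - a) ^ 2 - 2 * a * b + 4 * m₂) (-2 * (b - a)) 1 fun z => by ring).trans (by ring)
  have hy : ∫ y, ((δy - δz - y) ^ 2 * ((δy + δz - y) ^ 2 + 4 * m₂)
        + (4 * δz ^ 2 - 2 * (δy - δz - y) * (δy + δz - y) + 4 * m₂) * m₂ + m₄) ∂μ
      = (δy ^ 2 - δz ^ 2) ^ 2 + 2 * m₄ + 6 * m₂ ^ 2 + 8 * m₂ * (δy ^ 2 + δz ^ 2 - δy * δz) := by
    set d := δy - δz
    set s := δy + δz
    exact (integral_quartic_of_map_neg_eq_self hsymm hint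
      (d ^ 2 * s ^ 2 + 4 * m₂ * d ^ 2 + (4 * δz ^ 2 + 4 * m₂ - 2 * d * s) * m₂ + m₄)
      (-4 * δy * d * s - 8 * m₂ * d + 4 * m₂ * δy) (4 * δy ^ 2 + 2 * d * s + 2 * m₂)
      (-4 * δy) 1 fun y => by ring).trans (by ring)
  obtain ⟨hint_x, h_x⟩ :=
    integral_prod_eq_of_integral_eq (memLp_sqDistDiff hint δy δz).integrable_sq hx
  obtain ⟨-, h_z⟩ := integral_prod_eq_of_integral_eq hint_x hz
  rw [h_x, h_z, hy]

end SqDistDiff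

theorem mean_and_variance_of_squared_distance_difference_general
    {Ω : Type*} [MeasurableSpace Ω] (P : Measure Ω) [IsProbabilityMeasure P]
    (n : Fin 3 → Ω → ℝ) (hm : ∀ i, Measurable (n i))
    (hindep : iIndepFun n P)
    (μ : Measure ℝ) (hlaw : ∀ i, Measure.map (n i) P = μ)
    (hsymm : Measure.map (fun x : ℝ => -x) μ = μ)
    (σ μ₄ : ℝ)
    (hvar : ∫ x, x ^ 2 ∂μ = σ ^ 2)
    (hm4 : ∫ x, x ^ 4 ∂μ = μ₄)
    (hint : Integrable (fun x => x ^ 4) μ)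
    (δy δz : ℝ) :
    (∫ ω, ((n 0 ω - n 1 ω + δy) ^ 2 - (n 0 ω - n 2 ω + δz) ^ 2) ∂P)
      = δy ^ 2 - δz ^ 2 ∧
    variance (fun ω => (n 0 ω - n 1 ω + δy) ^ 2 - (n 0 ω - n 2 ω + δz) ^ 2) P
      = 2 * μ₄ + 6 * σ ^ 4 + 8 * σ ^ 2 * (δy ^ 2 + δz ^ 2 - δy * δz) := by
  have : IsProbabilityMeasure μ := hlaw 0 ▸ Measure.isProbabilityMeasure_map (hm 0).aemeasurable
  have hT : MeasurePreserving (fun ω => ((n 1 ω, n 2 ω), n 0 ω)) P ((μ.prod μ).prod μ) :=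
    ⟨((hm 1).prodMk (hm 2)).prodMk (hm 0), by
      rw [hindep.map_prodMk_prodMk_eq hm (by decide) (by decide) (by decide), hlaw, hlaw, hlaw]⟩
  have hz : (fun ω => (n 0 ω - n 1 ω + δy) ^ 2 - (n 0 ω - n 2 ω + δz) ^ 2)
      = fun ω => sqDistDiff δy δz ((n 1 ω, n 2 ω), n 0 ω) := rfl
  have hL2 := memLp_sqDistDiff hint δy δz
  rw [hz]
  constructor
  · rw [← integral_sqDistDiff hsymm hint δy δz, ← hT.map_eq,
      integral_map hT.aemeasurable (hT.map_eq ▸ hL2.aestronglyMeasurable)]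
  · rw [hT.variance_fun_comp (f := sqDistDiff δy δz) hL2.aestronglyMeasurable.aemeasurable,
      variance_eq_sub hL2]
    simp only [Pi.pow_apply]
    rw [integral_sqDistDiff_sq hsymm hint, integral_sqDistDiff hsymm hint, hvar, hm4]
    ring

/-- For i.i.d. symmetric random variables `n_x, n_y, n_z` with variance `σ²` and fourth
moment `μ₄`, and `z := (n_x − n_y + δ_y)² − (n_x − n_z + δ_z)²`, one has
`E(z) = δ_y² − δ_z²` and `Var(z) = 2μ₄ + 6σ⁴ + 8σ²(δ_y² + δ_z² − δ_yδ_z)`. -/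
theorem mean_and_variance_of_squared_distance_difference
    {Ω : Type*} [MeasurableSpace Ω] (P : Measure Ω) [IsProbabilityMeasure P]
    (n : Fin 3 → Ω → ℝ) (hm : ∀ i, Measurable (n i))
    (hindep : iIndepFun n P)
    (μ : Measure ℝ) (hlaw : ∀ i, Measure.map (n i) P = μ)
    (hsymm : Measure.map (fun x : ℝ => -x) μ = μ)
    (σ μ₄ : ℝ)
    (hmean : ∫ x, x ∂μ = 0)
    (hvar : ∫ x, x ^ 2 ∂μ = σ ^ 2)
    (hm4 : ∫ x, x ^ 4 ∂μ = μ₄)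
    (hint : Integrable (fun x => x ^ 4) μ)
    (δy δz : ℝ) :
    (∫ ω, ((n 0 ω - n 1 ω + δy) ^ 2 - (n 0 ω - n 2 ω + δz) ^ 2) ∂P)
      = δy ^ 2 - δz ^ 2 ∧
    variance (fun ω => (n 0 ω - n 1 ω + δy) ^ 2 - (n 0 ω - n 2 ω + δz) ^ 2) P
      = 2 * μ₄ + 6 * σ ^ 4 + 8 * σ ^ 2 * (δy ^ 2 + δz ^ 2 - δy * δz) :=
  mean_and_variance_of_squared_distance_difference_general P n hm hindep μ hlaw hsymm σ μ₄ hvar hm4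
    hint δy δz
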